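/- Let H̃>0, κ>0, and let Φ be the set of all φ∈C^{2,1}([0,1]^d,ℝ) with ‖φ‖_{C^{2,1}([0,1]^d,ℝ)} ≤ H̃. Let (U_j)_{j≥1} and (U'_j)_{j≥1} be independent i.i.d. random variables uniformly distributed on [0,1]^d, and let m:ℕ→ℕ be increasing with m(n)→∞. Define the empirical penalty P̂_n^{(κ)}(φ) = (1/m(n)) Σ_{j=1}^{m(n)} max(0, φ((U_j+U'_j)/2) − (φ(U_j)+φ(U'_j))/2 + (κ/8)‖U_j−U'_j‖²). Then almost surely sup_{φ∈Φ} |P̂_n^{(κ)}(φ) − P^{(κ)}(φ)| → 0 as n→∞. -/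

import Mathlib

open MeasureTheory ProbabilityTheory
open scoped ENNReal Classical

noncomputable section

abbrev E (d : ℕ) := EuclideanSpace ℝ (Fin d)

def cube (d : ℕ) : Set (E d) := {x | ∀ i, x i ∈ Set.Icc (0:ℝ) 1}

def lam (d : ℕ) : Measure (E d) := volume.restrict (cube d)

def KL {d : ℕ} (ν μ : Measure (E d)) : ℝ := ∫ x, Real.log ((ν.rnDeriv μ) x).toReal ∂ν

def JS {d : ℕ} (μ ν : Measure (E d)) : ℝ :=
  (1/2) * (KL ν ((2:ℝ≥0∞)⁻¹ • (μ + ν)) + KL μ ((2:ℝ≥0∞)⁻¹ • (μ + ν)))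

def ganLoss {d : ℕ} (μstar : Measure (E d)) (G : E d → E d) (D : E d → ℝ) : ℝ :=
  (1/2) * ((∫ y, Real.log (D y) ∂μstar) + ∫ z, Real.log (1 - D (G z)) ∂(lam d))

def hessW {d : ℕ} (φ : E d → ℝ) (x : E d) : E d →L[ℝ] E d →L[ℝ] ℝ :=
  fderivWithin ℝ (fun y => fderivWithin ℝ φ (cube d) y) (cube d) x

def gradW {d : ℕ} (φ : E d → ℝ) (x : E d) : E d :=
  (InnerProductSpace.toDual ℝ (E d)).symm (fderivWithin ℝ φ (cube d) x)

def hessMat {d : ℕ} (φ : E d → ℝ) (x : E d) : Matrix (Fin d) (Fin d) ℝ :=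
  fun i j => hessW φ x (EuclideanSpace.single i 1) (EuclideanSpace.single j 1)

def C2norm {d : ℕ} (φ : E d → ℝ) : ℝ :=
  ⨆ k : Fin 3, ⨆ x : cube d, ‖iteratedFDerivWithin ℝ (k : ℕ) φ (cube d) (x : E d)‖

def C21norm {d : ℕ} (φ : E d → ℝ) : ℝ :=
  C2norm φ + ⨆ p : cube d × cube d,
    ‖iteratedFDerivWithin ℝ 2 φ (cube d) (p.1 : E d) - iteratedFDerivWithin ℝ 2 φ (cube d) (p.2 : E d)‖
      / ‖(p.1 : E d) - (p.2 : E d)‖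

def Pen {d : ℕ} (κ : ℝ) (φ : E d → ℝ) : ℝ :=
  ∫ u, max 0 (φ ((2:ℝ)⁻¹ • (u.1 + u.2)) - (φ u.1 + φ u.2)/2 + (κ/8) * ‖u.1 - u.2‖^2)
    ∂((volume.restrict (cube d)).prod (volume.restrict (cube d)))
def empPen {Ω : Type*} {d : ℕ} (U U' : ℕ → Ω → E d) (κ : ℝ) (φ : E d → ℝ)
    (k : ℕ) (ω : Ω) : ℝ :=
  (1/(k:ℝ)) * ∑ j ∈ Finset.range k,
    max 0 (φ ((2:ℝ)⁻¹ • (U j ω + U' j ω)) - (φ (U j ω) + φ (U' j ω))/2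
      + (κ/8) * ‖U j ω - U' j ω‖^2)

/-!
Every `φ` in the `C^{2,1}`-ball is bounded by `H̃` and `H̃`-Lipschitz on the cube, so by
Arzelà–Ascoli the ball is totally bounded for the sup-distance on the cube, and the penalty
integrand `g_φ` depends `2`-Lipschitzly on `φ` for that distance. Hence for every `ε` finitely
many measurable integrands approximate all `g_φ` within `ε` on `cube × cube`; the strong law of
large numbers holds for all of them (for all `ε = 1/(k+1)`) on one event of full measure, and the
triangle inequality makes the convergence uniform over the ball. Composing with `m → ∞` passes
to the subsequence.
-/

open Filter Topology
open scoped NNReal BoundedContinuousFunction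

section EmpiricalMean

variable {Ω S : Type*}

def empiricalMean (X : ℕ → Ω → S) (g : S → ℝ) (n : ℕ) (ω : Ω) : ℝ :=
  (n : ℝ)⁻¹ * ∑ j ∈ Finset.range n, g (X j ω)

lemma abs_empiricalMean_sub_le {X : ℕ → Ω → S} {ω : Ω} {K : Set S} (hX : ∀ j, X j ω ∈ K)
    {g h : S → ℝ} {ε : ℝ} (hε : 0 ≤ ε) (hgh : ∀ x ∈ K, |g x - h x| ≤ ε) (n : ℕ) :
    |empiricalMean X g n ω - empiricalMean X h n ω| ≤ ε := by
  rcases n.eq_zero_or_pos with rfl | hn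
  · simpa [empiricalMean] using hε
  have hsum : |∑ j ∈ Finset.range n, (g (X j ω) - h (X j ω))| ≤ n * ε := by
    calc _ ≤ ∑ j ∈ Finset.range n, |g (X j ω) - h (X j ω)| := Finset.abs_sum_le_sum_abs _ _
      _ ≤ ∑ _j ∈ Finset.range n, ε := Finset.sum_le_sum fun j _ => hgh _ (hX j)
      _ = n * ε := by simp
  rw [empiricalMean, empiricalMean, ← mul_sub, ← Finset.sum_sub_distrib, abs_mul,
    abs_of_pos (by positivity), inv_mul_le_iff₀ (by positivity)]
  exact hsum

variable [MeasurableSpace S] {μ : Measure S}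

lemma abs_integral_sub_le [IsProbabilityMeasure μ] {K : Set S}
    (hK : ∀ᵐ x ∂μ, x ∈ K) {g h : S → ℝ} (hg : Integrable g μ) (hh : Integrable h μ) {ε : ℝ}
    (hgh : ∀ x ∈ K, |g x - h x| ≤ ε) :
    |∫ x, g x ∂μ - ∫ x, h x ∂μ| ≤ ε := by
  rw [← integral_sub hg hh]
  simpa using norm_integral_le_of_norm_le_const (f := fun x => g x - h x) (hK.mono hgh)

lemma abs_empiricalMean_sub_integral_le [IsProbabilityMeasure μ] {K : Set S}
    (hK : ∀ᵐ x ∂μ, x ∈ K) {X : ℕ → Ω → S} {ω : Ω} (hX : ∀ j, X j ω ∈ K) {g h : S → ℝ}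
    (hg : Integrable g μ) (hh : Integrable h μ) {ε : ℝ} (hε : 0 ≤ ε)
    (hgh : ∀ x ∈ K, |g x - h x| ≤ ε) (n : ℕ) :
    |empiricalMean X g n ω - ∫ x, g x ∂μ| ≤ |empiricalMean X h n ω - ∫ x, h x ∂μ| + 2 * ε := by
  have hmean := abs_empiricalMean_sub_le hX hε hgh n
  have hint := abs_integral_sub_le hK hg hh hgh
  have t₁ := abs_sub_le (empiricalMean X g n ω) (empiricalMean X h n ω) (∫ x, g x ∂μ)
  have t₂ := abs_sub_le (empiricalMean X h n ω) (∫ x, h x ∂μ) (∫ x, g x ∂μ)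
  rw [abs_sub_comm (∫ x, h x ∂μ)] at t₂
  linarith

variable [MeasurableSpace Ω] {P : Measure Ω} {X : ℕ → Ω → S}

lemma ae_tendsto_empiricalMean (hX : ∀ j, Measurable (X j))
    (hindep : Pairwise fun i j => IndepFun (X i) (X j) P) (hlaw : ∀ j, P.map (X j) = μ)
    {h : S → ℝ} (hm : Measurable h) (hi : Integrable h μ) :
    ∀ᵐ ω ∂P, Tendsto (fun n => empiricalMean X h n ω) atTop (𝓝 (∫ x, h x ∂μ)) := by
  have hident : ∀ j, IdentDistrib (h ∘ X j) (h ∘ X 0) P P := fun j =>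
    (IdentDistrib.mk (hX j).aemeasurable (hX 0).aemeasurable (by rw [hlaw j, hlaw 0])).comp hm
  have hmeas : AEStronglyMeasurable h (P.map (X 0)) := hlaw 0 ▸ hi.aestronglyMeasurable
  have hint : Integrable (h ∘ X 0) P :=
    (integrable_map_measure hmeas (hX 0).aemeasurable).1 (hlaw 0 ▸ hi)
  have hmean : ∫ ω, h (X 0 ω) ∂P = ∫ x, h x ∂μ := by
    rw [← hlaw 0, integral_map (hX 0).aemeasurable hmeas]
  simpa [empiricalMean, hmean] using
    strong_law_ae (fun j => h ∘ X j) hint (fun i j hij => (hindep hij).comp hm hm) hident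

theorem ae_tendsto_iSup_abs_empiricalMean_sub_integral {ι : Type*} [IsProbabilityMeasure P]
    (hX : ∀ j, Measurable (X j)) (hindep : Pairwise fun i j => IndepFun (X i) (X j) P)
    (hlaw : ∀ j, P.map (X j) = μ) {K : Set S} (hK : ∀ᵐ x ∂μ, x ∈ K)
    (g : ι → S → ℝ) (hg : ∀ i, Integrable (g i) μ)
    (hnet : ∀ ε > 0, ∃ 𝒩 : Finset (S → ℝ), (∀ h ∈ 𝒩, Measurable h ∧ Integrable h μ) ∧
      ∀ i, ∃ h ∈ 𝒩, ∀ x ∈ K, |g i x - h x| ≤ ε) :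
    ∀ᵐ ω ∂P, Tendsto (fun n => ⨆ i, |empiricalMean X (g i) n ω - ∫ x, g i x ∂μ|)
      atTop (𝓝 0) := by
  have : IsProbabilityMeasure μ :=
    hlaw 0 ▸ Measure.isProbabilityMeasure_map (hX 0).aemeasurable
  choose 𝒩 h𝒩 happrox using fun k : ℕ => hnet (1 / (k + 1)) Nat.one_div_pos_of_nat
  have hnet_conv : ∀ᵐ ω ∂P, ∀ k, ∀ h ∈ 𝒩 k,
      Tendsto (fun n => empiricalMean X h n ω) atTop (𝓝 (∫ x, h x ∂μ)) :=
    ae_all_iff.2 fun k => (eventually_all_finset _).2 fun h hh =>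
      ae_tendsto_empiricalMean hX hindep hlaw (h𝒩 k h hh).1 (h𝒩 k h hh).2
  have hmem : ∀ᵐ ω ∂P, ∀ j, X j ω ∈ K :=
    ae_all_iff.2 fun j => ae_of_ae_map (hX j).aemeasurable (hlaw j ▸ hK)
  filter_upwards [hnet_conv, hmem] with ω hconv hXK
  refine tendsto_order.2 ⟨fun a ha => .of_forall fun n =>
    ha.trans_le (Real.iSup_nonneg fun i => abs_nonneg _), fun ε hε => ?_⟩
  obtain ⟨k, hk⟩ := exists_nat_one_div_lt (div_pos hε three_pos)
  set δ : ℝ := 1 / (k + 1)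
  have hδ : 0 < δ := Nat.one_div_pos_of_nat
  have hclose : ∀ᶠ n in atTop, ∀ h ∈ 𝒩 k, |empiricalMean X h n ω - ∫ x, h x ∂μ| < δ :=
    (eventually_all_finset _).2 fun h hh =>
      (Metric.tendsto_nhds.1 (hconv k h hh) δ hδ).mono fun n hn => hn
  filter_upwards [hclose] with n hn
  refine (Real.iSup_le (fun i => ?_) (by positivity : (0 : ℝ) ≤ 3 * δ)).trans_lt (by linarith)
  obtain ⟨h, hh, hgh⟩ := happrox k i
  linarith [hn h hh,
    abs_empiricalMean_sub_integral_le hK hXK (hg i) (h𝒩 k h hh).2 hδ.le hgh n]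

end EmpiricalMean

section Cube

variable {d : ℕ}

lemma cube_eq_preimage :
    cube d = EuclideanSpace.equiv (Fin d) ℝ ⁻¹' Set.univ.pi fun _ => Set.Icc 0 1 := by
  ext x
  simp only [cube, Set.mem_ofPred_eq, Set.mem_preimage, Set.mem_univ_pi]
  rfl

lemma isCompact_cube : IsCompact (cube d) := by
  rw [cube_eq_preimage]
  exact (EuclideanSpace.equiv (Fin d) ℝ).toHomeomorph.isCompact_preimage.2
    (isCompact_univ_pi fun _ => isCompact_Icc)

lemma measurableSet_cube : MeasurableSet (cube d) :=
  isCompact_cube.isClosed.measurableSet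

lemma convex_cube : Convex ℝ (cube d) := by
  rw [cube_eq_preimage]
  exact (convex_pi fun _ _ => convex_Icc 0 1).linear_preimage
    (EuclideanSpace.equiv (Fin d) ℝ).toLinearEquiv.toLinearMap

lemma uniqueDiffOn_cube : UniqueDiffOn ℝ (cube d) := by
  rw [cube_eq_preimage, ContinuousLinearEquiv.uniqueDiffOn_preimage_iff]
  exact UniqueDiffOn.univ_pi fun _ => uniqueDiffOn_Icc_zero_one

lemma midpoint_mem_cube {x y : E d} (hx : x ∈ cube d) (hy : y ∈ cube d) :
    (2 : ℝ)⁻¹ • (x + y) ∈ cube d := by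
  simpa [smul_add] using convex_cube hx hy (by norm_num : (0 : ℝ) ≤ 2⁻¹)
    (by norm_num : (0 : ℝ) ≤ 2⁻¹) (by norm_num)

lemma ae_mem_cube_prod_cube : ∀ᵐ p ∂(lam d).prod (lam d), p ∈ cube d ×ˢ cube d := by
  rw [lam, Measure.prod_restrict]
  exact ae_restrict_mem (measurableSet_cube.prod measurableSet_cube)

end Cube

section C2Bounds

variable {d : ℕ} {φ : E d → ℝ}

lemma C2norm_le_C21norm : C2norm φ ≤ C21norm φ :=
  le_add_of_nonneg_right (Real.iSup_nonneg fun _ => div_nonneg (norm_nonneg _) (norm_nonneg _))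

lemma norm_iteratedFDerivWithin_le_C2norm (hφ : ContDiffOn ℝ 2 φ (cube d)) (k : Fin 3)
    {x : E d} (hx : x ∈ cube d) :
    ‖iteratedFDerivWithin ℝ k φ (cube d) x‖ ≤ C2norm φ := by
  have hcont : ContinuousOn (fun y => ‖iteratedFDerivWithin ℝ k φ (cube d) y‖) (cube d) :=
    (hφ.continuousOn_iteratedFDerivWithin (by exact_mod_cast Nat.le_of_lt_succ k.isLt)
      uniqueDiffOn_cube).norm
  obtain ⟨B, hB⟩ := isCompact_cube.bddAbove_image hcont
  have hbdd : BddAbove (Set.range fun y : cube d => ‖iteratedFDerivWithin ℝ k φ (cube d) y‖) :=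
    ⟨B, Set.forall_mem_range.2 fun y => hB ⟨y, y.2, rfl⟩⟩
  exact (le_ciSup hbdd ⟨x, hx⟩).trans
    (le_ciSup (f := fun k : Fin 3 => ⨆ y : cube d, ‖iteratedFDerivWithin ℝ k φ (cube d) y‖)
      (Set.finite_range _).bddAbove k)

lemma abs_le_of_C21norm_le (hφ : ContDiffOn ℝ 2 φ (cube d)) {H : ℝ} (hH : C21norm φ ≤ H)
    {x : E d} (hx : x ∈ cube d) : |φ x| ≤ H := by
  simpa using (norm_iteratedFDerivWithin_le_C2norm hφ 0 hx).trans (C2norm_le_C21norm.trans hH)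

lemma lipschitzOnWith_C2norm (hφ : ContDiffOn ℝ 2 φ (cube d)) :
    LipschitzOnWith (C2norm φ).toNNReal φ (cube d) := by
  refine convex_cube.lipschitzOnWith_of_nnnorm_fderivWithin_le
    (hφ.differentiableOn (by norm_num)) fun x hx => ?_
  rw [← NNReal.coe_le_coe, coe_nnnorm,
    ← norm_iteratedFDerivWithin_one φ (uniqueDiffOn_cube x hx)]
  exact (norm_iteratedFDerivWithin_le_C2norm hφ 1 hx).trans (Real.le_coe_toNNReal _)

lemma lipschitzOnWith_of_C21norm_le (hφ : ContDiffOn ℝ 2 φ (cube d)) {H : ℝ}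
    (hH : C21norm φ ≤ H) : LipschitzOnWith H.toNNReal φ (cube d) :=
  (lipschitzOnWith_C2norm hφ).weaken (Real.toNNReal_le_toNNReal (C2norm_le_C21norm.trans hH))

end C2Bounds

lemma exists_finset_approx_of_lipschitzOnWith {X : Type*} [MetricSpace X] [MeasurableSpace X]
    [OpensMeasurableSpace X] {K : Set X} (hK : IsCompact K) (L : ℝ≥0) (H : ℝ) {ε : ℝ}
    (hε : 0 < ε) :
    ∃ 𝒩 : Finset (X → ℝ), (∀ ψ ∈ 𝒩, Measurable ψ ∧ ContinuousOn ψ K) ∧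
      ∀ φ : X → ℝ, (∀ x ∈ K, |φ x| ≤ H) → LipschitzOnWith L φ K →
        ∃ ψ ∈ 𝒩, ∀ x ∈ K, |φ x - ψ x| ≤ ε := by
  have : CompactSpace K := isCompact_iff_compactSpace.1 hK
  set A : Set (K →ᵇ ℝ) := {f | LipschitzWith L f ∧ ∀ x, f x ∈ Set.Icc (-H) H}
  have hA : TotallyBounded A :=
    (BoundedContinuousFunction.arzela_ascoli _ isCompact_Icc A (fun f x hf => hf.2 x)
      (LipschitzWith.uniformEquicontinuous _ L fun f => f.2.1).equicontinuous
      ).totallyBounded.subset subset_closure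
  obtain ⟨t, ht, hAt⟩ := Metric.totallyBounded_iff.1 hA ε hε
  -- The approximants are extended by zero off `K`, where the `φ` may be non-measurable.
  let ext : (K →ᵇ ℝ) → X → ℝ := fun f => Function.extend Subtype.val f 0
  have ext_apply : ∀ f, ∀ x : K, ext f x = f x := fun f =>
    Subtype.val_injective.extend_apply _ _
  refine ⟨ht.toFinset.image ext, ?_, fun φ hφH hφL => ?_⟩
  · simp only [Finset.mem_image, Set.Finite.mem_toFinset]
    rintro _ ⟨f, -, rfl⟩
    refine ⟨(MeasurableEmbedding.subtype_coe hK.isClosed.measurableSet).measurable_extend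
      f.continuous.measurable measurable_const, ?_⟩
    rw [continuousOn_iff_continuous_domRestrict]
    convert f.continuous using 1
    exact funext (ext_apply f)
  · let f : K →ᵇ ℝ := .mkOfCompact ⟨K.domRestrict φ, hφL.continuousOn.domRestrict⟩
    have hfA : f ∈ A := ⟨lipschitzOnWith_iff_restrict.1 hφL, fun x => abs_le.1 (hφH x x.2)⟩
    obtain ⟨c, hct, hfc⟩ := Set.mem_iUnion₂.1 (hAt hfA)
    refine ⟨ext c, Finset.mem_image_of_mem _ (ht.mem_toFinset.2 hct), fun x hx => ?_⟩
    rw [ext_apply c ⟨x, hx⟩, ← Real.dist_eq]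
    exact (BoundedContinuousFunction.dist_coe_le_dist (f := f) ⟨x, hx⟩).trans (le_of_lt hfc)

section Penalty

variable {d : ℕ}

def penIntegrand (κ : ℝ) (φ : E d → ℝ) (p : E d × E d) : ℝ :=
  max 0 (φ ((2:ℝ)⁻¹ • (p.1 + p.2)) - (φ p.1 + φ p.2)/2 + (κ/8) * ‖p.1 - p.2‖^2)

lemma Pen_eq_integral_penIntegrand (κ : ℝ) (φ : E d → ℝ) :
    Pen κ φ = ∫ p, penIntegrand κ φ p ∂(lam d).prod (lam d) := rfl

lemma empPen_eq_empiricalMean {Ω : Type*} (U U' : ℕ → Ω → E d) (κ : ℝ) (φ : E d → ℝ) (k : ℕ)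
    (ω : Ω) :
    empPen U U' κ φ k ω = empiricalMean (fun j ω => (U j ω, U' j ω)) (penIntegrand κ φ) k ω := by
  rw [empPen, empiricalMean, one_div]
  rfl

variable {κ : ℝ} {φ ψ : E d → ℝ}

lemma abs_penIntegrand_sub_le {ε : ℝ} (hφψ : ∀ x ∈ cube d, |φ x - ψ x| ≤ ε)
    {p : E d × E d} (hp : p ∈ cube d ×ˢ cube d) :
    |penIntegrand κ φ p - penIntegrand κ ψ p| ≤ 2 * ε := by
  have h₁ := abs_le.1 (hφψ _ (midpoint_mem_cube hp.1 hp.2))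
  have h₂ := abs_le.1 (hφψ _ hp.1)
  have h₃ := abs_le.1 (hφψ _ hp.2)
  refine (abs_max_sub_max_le_max _ _ _ _).trans
    (max_le (by simp only [sub_self, abs_zero]; linarith) (abs_le.2 ⟨?_, ?_⟩)) <;> linarith

lemma measurable_penIntegrand (hφ : Measurable φ) : Measurable (penIntegrand κ φ) := by
  unfold penIntegrand
  fun_prop

lemma continuousOn_penIntegrand (hφ : ContinuousOn φ (cube d)) :
    ContinuousOn (penIntegrand κ φ) (cube d ×ˢ cube d) := by
  have hmid :
      ContinuousOn (fun p : E d × E d => φ ((2:ℝ)⁻¹ • (p.1 + p.2))) (cube d ×ˢ cube d) :=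
    hφ.comp (by fun_prop) fun p hp => midpoint_mem_cube hp.1 hp.2
  have hfst : ContinuousOn (fun p : E d × E d => φ p.1) (cube d ×ˢ cube d) :=
    hφ.comp continuousOn_fst fun p hp => hp.1
  have hsnd : ContinuousOn (fun p : E d × E d => φ p.2) (cube d ×ˢ cube d) :=
    hφ.comp continuousOn_snd fun p hp => hp.2
  exact continuousOn_const.sup ((hmid.sub ((hfst.add hsnd).div_const 2)).add (by fun_prop))

lemma integrable_penIntegrand (hφ : ContinuousOn φ (cube d)) :
    Integrable (penIntegrand κ φ) ((lam d).prod (lam d)) := by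
  rw [lam, Measure.prod_restrict]
  exact (continuousOn_penIntegrand hφ).integrableOn_compact (isCompact_cube.prod isCompact_cube)

lemma exists_finset_approx_penIntegrand (κ : ℝ) (L : ℝ≥0) (H : ℝ) {ε : ℝ} (hε : 0 < ε) :
    ∃ 𝒩 : Finset (E d × E d → ℝ),
      (∀ h ∈ 𝒩, Measurable h ∧ Integrable h ((lam d).prod (lam d))) ∧
      ∀ φ : E d → ℝ, (∀ x ∈ cube d, |φ x| ≤ H) → LipschitzOnWith L φ (cube d) →
        ∃ h ∈ 𝒩, ∀ p ∈ cube d ×ˢ cube d, |penIntegrand κ φ p - h p| ≤ ε := by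
  obtain ⟨𝒩, h𝒩, happrox⟩ :=
    exists_finset_approx_of_lipschitzOnWith isCompact_cube L H (half_pos hε)
  refine ⟨𝒩.image (penIntegrand κ), ?_, fun φ hφH hφL => ?_⟩
  · simp only [Finset.mem_image]
    rintro _ ⟨ψ, hψ, rfl⟩
    exact ⟨measurable_penIntegrand (h𝒩 ψ hψ).1, integrable_penIntegrand (h𝒩 ψ hψ).2⟩
  · obtain ⟨ψ, hψ, hφψ⟩ := happrox φ hφH hφL
    refine ⟨_, Finset.mem_image_of_mem _ hψ, fun p hp => ?_⟩
    simpa [mul_div_cancel₀] using abs_penIntegrand_sub_le hφψ hp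

end Penalty

lemma ProbabilityTheory.iIndepFun.pairwise_indepFun_prodMk {Ω β : Type*} [MeasurableSpace Ω]
    [MeasurableSpace β] {P : Measure Ω} {U U' : ℕ → Ω → β} (hU : ∀ j, Measurable (U j))
    (hU' : ∀ j, Measurable (U' j)) (h : iIndepFun (Sum.elim U U') P) :
    Pairwise fun i j => IndepFun (fun ω => (U i ω, U' i ω)) (fun ω => (U j ω, U' j ω)) P :=
  fun i j hij => h.indepFun_prodMk_prodMk (by rintro (k | k); exacts [hU k, hU' k])
    (.inl i) (.inr i) (.inl j) (.inr j) (by simpa using hij) (by simp) (by simp)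
    (by simpa using hij)

theorem stmt14_general {d : ℕ} {Ω : Type*} [MeasurableSpace Ω]
    (P : Measure Ω) [IsProbabilityMeasure P]
    (Htilde κ : ℝ)
    (Φ : Set (E d → ℝ))
    (hΦ : Φ = {φ | ContDiffOn ℝ 2 φ (cube d) ∧ C21norm φ ≤ Htilde ∧
      LipschitzOnWith (Real.toNNReal Htilde)
        (fun x => iteratedFDerivWithin ℝ 2 φ (cube d) x) (cube d)})
    (U U' : ℕ → Ω → E d)
    (hU_meas : ∀ j, Measurable (U j)) (hU'_meas : ∀ j, Measurable (U' j))
    (hU_law : ∀ j, P.map (U j) = lam d) (hU'_law : ∀ j, P.map (U' j) = lam d)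
    (hindep : iIndepFun (Sum.elim U U') P)
    (m : ℕ → ℕ)
    (hm_top : Filter.Tendsto m Filter.atTop Filter.atTop) :
    ∀ᵐ ω ∂P, Filter.Tendsto
      (fun n => ⨆ φ : Φ, |empPen U U' κ (φ : E d → ℝ) (m n) ω - Pen κ (φ : E d → ℝ)|)
      Filter.atTop (nhds 0) := by
  have hX : ∀ j, Measurable fun ω => (U j ω, U' j ω) := fun j =>
    (hU_meas j).prodMk (hU'_meas j)
  have hlaw : ∀ j, P.map (fun ω => (U j ω, U' j ω)) = (lam d).prod (lam d) := fun j => by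
    rw [(indepFun_iff_map_prod_eq_prod_map_map (hU_meas j).aemeasurable
      (hU'_meas j).aemeasurable).1
      (hindep.indepFun Sum.inl_ne_inr : IndepFun (U j) (U' j) P), hU_law, hU'_law]
  have hΦ_bdd : ∀ φ ∈ Φ, (∀ x ∈ cube d, |φ x| ≤ Htilde) ∧
      LipschitzOnWith Htilde.toNNReal φ (cube d) := by
    rw [hΦ]
    rintro φ ⟨hφ, hφH, -⟩
    exact ⟨fun x => abs_le_of_C21norm_le hφ hφH, lipschitzOnWith_of_C21norm_le hφ hφH⟩
  have hnet : ∀ ε > 0, ∃ 𝒩 : Finset (E d × E d → ℝ),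
      (∀ h ∈ 𝒩, Measurable h ∧ Integrable h ((lam d).prod (lam d))) ∧
      ∀ φ : Φ, ∃ h ∈ 𝒩, ∀ p ∈ cube d ×ˢ cube d, |penIntegrand κ φ p - h p| ≤ ε :=
    fun ε hε => (exists_finset_approx_penIntegrand κ _ Htilde hε).imp fun _ h =>
      ⟨h.1, fun φ => h.2 φ (hΦ_bdd φ φ.2).1 (hΦ_bdd φ φ.2).2⟩
  filter_upwards [ae_tendsto_iSup_abs_empiricalMean_sub_integral hX
    (hindep.pairwise_indepFun_prodMk hU_meas hU'_meas) hlaw ae_mem_cube_prod_cube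
    (fun φ : Φ => penIntegrand κ φ)
    (fun φ => integrable_penIntegrand (hΦ_bdd φ φ.2).2.continuousOn) hnet] with ω hω
  simpa only [empPen_eq_empiricalMean, Pen_eq_integral_penIntegrand, Function.comp_def] using
    hω.comp hm_top

/-- uniform law of large numbers for the empirical convexity penalty over a
`C^{2,1}`-ball: `sup_{φ∈Φ} |P̂_n^{(κ)}(φ) − P^{(κ)}(φ)| → 0` almost surely. -/
theorem stmt14 {d : ℕ} {Ω : Type*} [MeasurableSpace Ω]
    (P : Measure Ω) [IsProbabilityMeasure P]
    (Htilde κ : ℝ) (hH : 0 < Htilde) (hκ : 0 < κ)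
    (Φ : Set (E d → ℝ))
    (hΦ : Φ = {φ | ContDiffOn ℝ 2 φ (cube d) ∧ C21norm φ ≤ Htilde ∧
      LipschitzOnWith (Real.toNNReal Htilde)
        (fun x => iteratedFDerivWithin ℝ 2 φ (cube d) x) (cube d)})
    (U U' : ℕ → Ω → E d)
    (hU_meas : ∀ j, Measurable (U j)) (hU'_meas : ∀ j, Measurable (U' j))
    (hU_law : ∀ j, P.map (U j) = lam d) (hU'_law : ∀ j, P.map (U' j) = lam d)
    (hindep : iIndepFun (Sum.elim U U') P)
    (m : ℕ → ℕ) (hm : StrictMono m)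
    (hm_top : Filter.Tendsto m Filter.atTop Filter.atTop) :
    ∀ᵐ ω ∂P, Filter.Tendsto
      (fun n => ⨆ φ : Φ, |empPen U U' κ (φ : E d → ℝ) (m n) ω - Pen κ (φ : E d → ℝ)|)
      Filter.atTop (nhds 0) :=
  stmt14_general P Htilde κ Φ hΦ U U' hU_meas hU'_meas hU_law hU'_law hindep m hm_top

end
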